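/- With G_k and G as in the context: (a) the sequence (G_k) is Cauchy in the L¹ seminorm: for every ε > 0 there exists N such that for all k, m ≥ N, ∫_{[0,1]} |G_k − G_m| dλ < ε; (b) ∫_{[0,1]} |G − G_k| dλ → 0 as k → ∞; and (c) for every function f : ℝ → ℝ that is Riemann integrable on [0,1], it is NOT the case that ∫_{[0,1]} |f − G_k| dλ → 0. Hence the normed space of a.e.-equivalence classes of Riemann integrable functions on [0,1] with the L¹ norm is not complete. -/

import Mathlib

/-!
By dominated convergence `G_k → G = 1_A` in `L¹[0,1]`, so `(G_k)` is Cauchy. If a Riemann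
integrable `f` were also an `L¹` limit of `(G_k)`, then `f = 1_A` a.e. on `[0,1]`. This step needs
`f` to be Lebesgue integrable (otherwise every `∫ |f - G_k|` is the junk value `0`): a Riemann
integrable function is bounded and, by the Cauchy criterion applied to oscillations, continuous
a.e. Now `|A| ≤ ∑ ℓ / 2^j = ℓ < 1`, while `A` contains an interval around every rational of `[0,1]`,
so it meets each subinterval in positive measure. On any partition, tag each cell once at a point of
`A` where `f = 1`, and once, unless the cell lies in `A` up to a null set, at a point outside `A`
where `f = 0`: the two Riemann sums differ by at least `1 - ℓ`, contradicting the Cauchy criterion.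
-/

open MeasureTheory Filter Topology BoxIntegral

noncomputable def unitBox : BoxIntegral.Box (Fin 1) :=
  ⟨fun _ => 0, fun _ => 1, fun _ => one_pos⟩

/-- `f : ℝ → ℝ` is Riemann integrable on `[0,1]`, in the sense of Mathlib's
box-integral theory with the Riemann integration parameters. -/
def RiemannIntegrableOn01 (f : ℝ → ℝ) : Prop :=
  BoxIntegral.Integrable unitBox BoxIntegral.IntegrationParams.Riemann
    (fun x => f (x 0)) (volume : Measure (Fin 1 → ℝ)).toBoxAdditive.toSMul

open Set

lemma oscillation_le_of_forall_dist_le {E F : Type*} [TopologicalSpace E] [PseudoMetricSpace F]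
    {f : E → F} {x : E} {U : Set E} (hU : U ∈ 𝓝 x) {ε : ℝ}
    (h : ∀ y ∈ U, ∀ z ∈ U, dist (f y) (f z) ≤ ε) : oscillation f x ≤ ENNReal.ofReal ε := by
  refine (biInf_le _ (image_mem_map hU)).trans (Metric.ediam_le ?_)
  rintro _ ⟨y, hy, rfl⟩ _ ⟨z, hz, rfl⟩
  rw [edist_dist]
  exact ENNReal.ofReal_le_ofReal (h y hy z hz)

theorem aestronglyMeasurable_of_ae_continuousAt {α β : Type*} [TopologicalSpace α]
    [MeasurableSpace α] [OpensMeasurableSpace α] [PseudoMetricSpace β]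
    [SecondCountableTopologyEither α β] {f : α → β} {μ : Measure α}
    (h : ∀ᵐ x ∂μ, ContinuousAt f x) : AEStronglyMeasurable f μ := by
  rw [← Measure.restrict_eq_self_of_ae_mem h]
  exact (continuousOn_of_forall_continuousAt fun _ hx => hx).aestronglyMeasurable
    (measurableSet_of_continuousAt f)

section L1

variable {α : Type*} [MeasurableSpace α] {μ : Measure α}

lemma integral_abs_sub_le_add {f g h : α → ℝ} (hf : Integrable f μ) (hg : Integrable g μ)
    (hh : Integrable h μ) :
    ∫ x, |f x - h x| ∂μ ≤ ∫ x, |f x - g x| ∂μ + ∫ x, |h x - g x| ∂μ := by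
  calc ∫ x, |f x - h x| ∂μ ≤ ∫ x, (|f x - g x| + |h x - g x|) ∂μ :=
        integral_mono (hf.sub hh).abs ((hf.sub hg).abs.add (hh.sub hg).abs) fun x =>
          (abs_sub_le _ (g x) _).trans_eq (by rw [abs_sub_comm (g x)])
    _ = ∫ x, |f x - g x| ∂μ + ∫ x, |h x - g x| ∂μ :=
        integral_add (hf.sub hg).abs (hh.sub hg).abs

lemma ae_eq_of_tendsto_integral_abs_sub {f g : α → ℝ} {u : ℕ → α → ℝ} (hf : Integrable f μ)
    (hg : Integrable g μ) (hu : ∀ k, Integrable (u k) μ)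
    (hfu : Tendsto (fun k => ∫ x, |f x - u k x| ∂μ) atTop (𝓝 0))
    (hgu : Tendsto (fun k => ∫ x, |g x - u k x| ∂μ) atTop (𝓝 0)) : f =ᵐ[μ] g := by
  have h0 : ∫ x, |f x - g x| ∂μ = 0 :=
    le_antisymm (ge_of_tendsto (by simpa using hfu.add hgu)
      (.of_forall fun k => integral_abs_sub_le_add hf (hu k) hg))
      (integral_nonneg fun _ => abs_nonneg _)
  filter_upwards [(integral_eq_zero_iff_of_nonneg (fun _ => abs_nonneg _) (hf.sub hg).abs).1 h0]
    with x hx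
  exact sub_eq_zero.1 (abs_eq_zero.1 hx)

lemma exists_forall_integral_abs_sub_lt {g : α → ℝ} {u : ℕ → α → ℝ} (hg : Integrable g μ)
    (hu : ∀ k, Integrable (u k) μ)
    (hgu : Tendsto (fun k => ∫ x, |g x - u k x| ∂μ) atTop (𝓝 0)) :
    ∀ ε : ℝ, 0 < ε → ∃ N : ℕ, ∀ k ≥ N, ∀ m ≥ N, ∫ x, |u k x - u m x| ∂μ < ε := by
  intro ε hε
  obtain ⟨N, hN⟩ := eventually_atTop.1 (hgu.eventually (gt_mem_nhds (half_pos hε)))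
  refine ⟨N, fun k hk m hm => ?_⟩
  calc ∫ x, |u k x - u m x| ∂μ ≤ ∫ x, |u k x - g x| ∂μ + ∫ x, |u m x - g x| ∂μ :=
        integral_abs_sub_le_add (hu k) hg (hu m)
    _ = ∫ x, |g x - u k x| ∂μ + ∫ x, |g x - u m x| ∂μ := by simp only [abs_sub_comm (u _ _)]
    _ < ε := by linarith [hN k hk, hN m hm]

lemma tendsto_integral_abs_indicator_iUnion_sub [IsFiniteMeasure μ] {s : ℕ → Set α}
    (hs : Monotone s) (hsm : ∀ k, MeasurableSet (s k)) :
    Tendsto (fun k => ∫ x, |(⋃ n, s n).indicator (fun _ => (1 : ℝ)) x -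
      (s k).indicator (fun _ => 1) x| ∂μ) atTop (𝓝 0) := by
  have hlim : ∀ x, ∀ᶠ k in atTop,
      (s k).indicator (fun _ => (1 : ℝ)) x = (⋃ n, s n).indicator (fun _ => 1) x := by
    intro x
    by_cases hx : x ∈ ⋃ n, s n
    · obtain ⟨n, hn⟩ := mem_iUnion.1 hx
      filter_upwards [eventually_ge_atTop n] with k hk
      rw [indicator_of_mem (hs hk hn), indicator_of_mem hx]
    · refine .of_forall fun k => ?_
      rw [indicator_of_notMem hx, indicator_of_notMem fun h => hx (mem_iUnion_of_mem k h)]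
  have hint : ∀ t : Set α, MeasurableSet t → Integrable (t.indicator fun _ => (1 : ℝ)) μ :=
    fun t ht => (MeasureTheory.integrable_const 1).indicator ht
  simpa using tendsto_integral_of_dominated_convergence (f := fun _ => 0) (fun _ => 1)
    (fun k => ((hint _ (.iUnion hsm)).sub (hint _ (hsm k))).abs.aestronglyMeasurable)
    (MeasureTheory.integrable_const 1)
    (fun k => .of_forall fun x => by
      simp only [Pi.sub_apply, norm_abs_eq_norm, Real.norm_eq_abs]
      unfold indicator
      split_ifs <;> norm_num)
    (.of_forall fun x => tendsto_const_nhds.congr' ((hlim x).mono fun k hk => by simp [hk]))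

end L1

namespace BoxIntegral

variable {ι : Type*} {I : Box ι}

lemma Box.isOpen_Ioo [Finite ι] (J : Box ι) : IsOpen (Box.Ioo J) :=
  isOpen_set_pi finite_univ fun _ _ => _root_.isOpen_Ioo

namespace Prepartition

open scoped Classical in
noncomputable def tagWith (π : Prepartition I) (t : Box ι → ι → ℝ)
    (ht : ∀ J ∈ π, t J ∈ Box.Icc J) : TaggedPrepartition I where
  toPrepartition := π
  tag J := if J ∈ π then t J else I.upper
  tag_mem_Icc J := by
    split_ifs with hJ
    · exact Box.le_iff_Icc.1 (π.le_of_mem hJ) (ht J hJ)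
    · exact I.upper_mem_Icc

variable {π : Prepartition I} {t : Box ι → ι → ℝ} {ht : ∀ J ∈ π, t J ∈ Box.Icc J}

lemma tagWith_tag {J : Box ι} (hJ : J ∈ π) : (π.tagWith t ht).tag J = t J :=
  if_pos hJ

lemma isHenstock_tagWith : (π.tagWith t ht).IsHenstock := fun J (hJ : J ∈ π) => by
  rw [tagWith_tag hJ]; exact ht J hJ

lemma integralSum_tagWith {E F : Type*} [NormedAddCommGroup E] [NormedSpace ℝ E]
    [NormedAddCommGroup F] [NormedSpace ℝ F] (f : (ι → ℝ) → E) (vol : ι →ᵇᵃ (E →L[ℝ] F)) :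
    integralSum f vol (π.tagWith t ht) = ∑ J ∈ π.boxes, vol J (f (t J)) :=
  Finset.sum_congr rfl fun _ hJ => by rw [tagWith_tag hJ]

end Prepartition

variable [Fintype ι]

lemma Box.volume_real_pos (J : Box ι) : 0 < volume.real (J : Set (ι → ℝ)) := by
  rw [← Measure.toBoxAdditive_apply, Box.volume_apply]
  exact Finset.prod_pos fun i _ => sub_pos.2 (J.lower_lt_upper i)

lemma Box.oscillation_le_of_forall_sub_lt {f : (ι → ℝ) → ℝ} {J : Box ι} {x : ι → ℝ}
    (hx : x ∈ Box.Ioo J) {ε : ℝ} (h : ∀ y ∈ Box.Icc J, ∀ z ∈ Box.Icc J, f y - f z < ε) :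
    oscillation f x ≤ ENNReal.ofReal ε := by
  refine oscillation_le_of_forall_dist_le ((Box.isOpen_Ioo J).mem_nhds hx) fun y hy z hz => ?_
  have hy' := J.Ioo_subset_Icc hy
  have hz' := J.Ioo_subset_Icc hz
  rw [Real.dist_eq, abs_le]
  constructor <;> linarith [h y hy' z hz', h z hz' y hy']

lemma Box.volume_biUnion_Icc_sdiff_Ioo (s : Finset (Box ι)) :
    volume (⋃ J ∈ s, Box.Icc J \ Box.Ioo J) = 0 :=
  (measure_biUnion_null_iff s.countable_toSet).2 fun J _ =>
    (ae_eq_set.1 (Box.Ioo_ae_eq_Icc J)).2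

lemma Box.volume_biUnion_Icc_le (s : Finset (Box ι)) :
    volume (⋃ J ∈ s, Box.Icc J) ≤ ENNReal.ofReal (∑ J ∈ s, volume.real (J : Set (ι → ℝ))) := by
  refine (measure_biUnion_finset_le _ _).trans_eq ?_
  rw [ENNReal.ofReal_sum_of_nonneg fun J _ => measureReal_nonneg]
  refine Finset.sum_congr rfl fun J _ => ?_
  rw [← measure_congr (Box.coe_ae_eq_Icc J), ofReal_measureReal (J.measure_coe_lt_top _).ne]

open scoped Classical in
lemma Prepartition.sum_measureReal_filter_le (π : Prepartition I) (μ : Measure (ι → ℝ))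
    [IsLocallyFiniteMeasure μ] (A : Set (ι → ℝ)) :
    ∑ J ∈ π.boxes.filter (fun J : Box ι => μ (↑J \ A) = 0), μ.real (J : Set (ι → ℝ)) ≤
      μ.real (A ∩ I) := by
  set π' := π.filter fun J => μ (↑J \ A) = 0
  have hsum : ∑ J ∈ π.boxes.filter (fun J : Box ι => μ (↑J \ A) = 0),
      μ.real (J : Set (ι → ℝ)) = μ.real π'.iUnion := by
    rw [π'.measure_iUnion_toReal μ]
    exact Finset.sum_congr (Finset.ext fun J => by
      simp only [Finset.mem_filter, π', Prepartition.mem_boxes, Prepartition.mem_filter])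
      fun _ _ => rfl
  rw [hsum]
  have hdiff : π'.iUnion \ (A ∩ I) ⊆ ⋃ J ∈ π', (J : Set (ι → ℝ)) \ A := by
    rintro x ⟨hx, hxA⟩
    obtain ⟨J, hJ, hxJ⟩ := π'.mem_iUnion.1 hx
    exact mem_iUnion₂.2 ⟨J, hJ, hxJ, fun h => hxA ⟨h, π'.le_of_mem hJ hxJ⟩⟩
  have hnull : μ (⋃ J ∈ π', (J : Set (ι → ℝ)) \ A) = 0 :=
    (measure_biUnion_null_iff π'.boxes.countable_toSet).2 fun J hJ => (π.mem_filter.1 hJ).2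
  exact ENNReal.toReal_mono
    (measure_ne_top_of_subset inter_subset_right (I.measure_coe_lt_top μ).ne)
    (measure_mono_ae (ae_le_set.2 (measure_mono_null hdiff hnull)))

theorem Integrable.exists_isPartition_dist_sum_le {E F : Type*} [NormedAddCommGroup E]
    [NormedSpace ℝ E] [NormedAddCommGroup F] [NormedSpace ℝ F] {f : (ι → ℝ) → E}
    {vol : ι →ᵇᵃ (E →L[ℝ] F)} (h : Integrable I IntegrationParams.Riemann f vol) {ε : ℝ}
    (hε : 0 < ε) :
    ∃ π : Prepartition I, π.IsPartition ∧ ∀ t₁ t₂ : Box ι → ι → ℝ,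
      (∀ J ∈ π, t₁ J ∈ Box.Icc J) → (∀ J ∈ π, t₂ J ∈ Box.Icc J) →
      dist (∑ J ∈ π.boxes, vol J (f (t₁ J))) (∑ J ∈ π.boxes, vol J (f (t₂ J))) ≤ ε := by
  set r := h.convergenceR (ε / 2) 1
  have hr : ∀ x, r x = r 0 := h.convergenceR_cond (ε / 2) 1 rfl
  obtain ⟨π₀, hπ₀, -, hsub, -⟩ :=
    Box.exists_taggedPartition_isHenstock_isSubordinate_homothetic I
      (fun _ => ⟨(r 0 : ℝ) / 2, half_pos (r 0).2.out⟩)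
  -- any retagging of `π₀` is subordinate to `r`, since its boxes have radius `r 0 / 2`
  have hbase : ∀ t (ht : ∀ J ∈ π₀.toPrepartition, t J ∈ Box.Icc J),
      IntegrationParams.Riemann.MemBaseSet I 1 r (π₀.toPrepartition.tagWith t ht) := by
    intro t ht
    refine ⟨fun J (hJ : J ∈ π₀.toPrepartition) x hx => ?_,
      fun _ => Prepartition.isHenstock_tagWith,
      fun hD => absurd hD Bool.false_ne_true, fun hD => absurd hD Bool.false_ne_true⟩
    rw [Prepartition.tagWith_tag hJ, hr, Metric.mem_closedBall]
    have hx' := Metric.mem_closedBall.1 (hsub J hJ hx)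
    have ht' := Metric.mem_closedBall.1 (hsub J hJ (ht J hJ))
    linarith [dist_triangle_right x (t J) (π₀.tag J)]
  refine ⟨π₀.toPrepartition, hπ₀, fun t₁ t₂ ht₁ ht₂ => ?_⟩
  rw [← Prepartition.integralSum_tagWith (ht := ht₁),
    ← Prepartition.integralSum_tagWith (ht := ht₂), ← add_halves ε]
  exact h.dist_integralSum_le_of_memBaseSet (half_pos hε) (half_pos hε) (hbase t₁ ht₁)
    (hbase t₂ ht₂) rfl

theorem Integrable.exists_forall_norm_le {E : Type*} [NormedAddCommGroup E] [NormedSpace ℝ E]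
    {f : (ι → ℝ) → E} (h : Integrable I IntegrationParams.Riemann f BoxAdditiveMap.volume) :
    ∃ C, ∀ x ∈ (I : Set (ι → ℝ)), ‖f x‖ ≤ C := by
  classical
  obtain ⟨π, hπ, hclose⟩ := h.exists_isPartition_dist_sum_le one_pos
  set bound : Box ι → ℝ := fun J => ‖f J.upper‖ + (volume.real (J : Set (ι → ℝ)))⁻¹
  refine ⟨∑ J ∈ π.boxes, bound J, fun x hx => ?_⟩
  obtain ⟨J, hJ, hxJ⟩ := hπ x hx
  set t := Function.update Box.upper J x
  have hdist := hclose t Box.upper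
    (fun J' _ => by
      rcases eq_or_ne J' J with rfl | hne
      · simp [t, Box.coe_subset_Icc hxJ]
      · simp [t, Function.update_of_ne hne, J'.upper_mem_Icc])
    (fun J' _ => J'.upper_mem_Icc)
  have hsum : ∑ J' ∈ π.boxes, BoxAdditiveMap.volume J' (f (t J')) -
      ∑ J' ∈ π.boxes, BoxAdditiveMap.volume J' (f J'.upper) =
      volume.real (J : Set (ι → ℝ)) • (f x - f J.upper) := by
    rw [← Finset.sum_sub_distrib, Finset.sum_eq_single_of_mem J hJ fun J' _ hne => by
      simp [t, Function.update_of_ne hne]]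
    simp [t, BoxAdditiveMap.volume, smul_sub]
  rw [dist_eq_norm, hsum, norm_smul, Real.norm_of_nonneg measureReal_nonneg] at hdist
  have hvol := Box.volume_real_pos J
  calc ‖f x‖ ≤ ‖f J.upper‖ + ‖f x - f J.upper‖ := norm_le_norm_add_norm_sub' _ _
    _ ≤ bound J := by
      have : ‖f x - f J.upper‖ ≤ (volume.real (J : Set (ι → ℝ)))⁻¹ := by
        rwa [inv_eq_one_div, le_div_iff₀' hvol]
      simpa [bound] using this
    _ ≤ _ := Finset.single_le_sum (fun J' _ => by have := Box.volume_real_pos J'; positivity) hJ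

theorem Integrable.volume_lt_oscillation_le {f : (ι → ℝ) → ℝ}
    (h : Integrable I IntegrationParams.Riemann f BoxAdditiveMap.volume) {ε δ : ℝ}
    (hε : 0 < ε) (hδ : 0 < δ) :
    volume {x ∈ (I : Set (ι → ℝ)) | ENNReal.ofReal ε < oscillation f x} ≤ ENNReal.ofReal δ := by
  classical
  obtain ⟨π, hπ, hclose⟩ := h.exists_isPartition_dist_sum_le (mul_pos hε hδ)
  set IsBad : Box ι → Prop := fun J => ∃ y ∈ Box.Icc J, ∃ z ∈ Box.Icc J, ε ≤ f y - f z
  have htags : ∀ J, ∃ y ∈ Box.Icc J, ∃ z ∈ Box.Icc J,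
      0 ≤ f y - f z ∧ (IsBad J → ε ≤ f y - f z) := by
    intro J
    by_cases hJ : IsBad J
    · obtain ⟨y, hy, z, hz, hyz⟩ := hJ
      exact ⟨y, hy, z, hz, hε.le.trans hyz, fun _ => hyz⟩
    · exact ⟨J.upper, J.upper_mem_Icc, J.upper, J.upper_mem_Icc, by simp, fun h => absurd h hJ⟩
  choose t₁ ht₁ t₂ ht₂ hpos hbad using htags
  set bad := π.boxes.filter IsBad
  -- moving the tags of the bad boxes from `t₂` to `t₁` changes the Riemann sum by at least
  -- `ε` times their total volume
  have hsum : ε * ∑ J ∈ bad, volume.real (J : Set (ι → ℝ)) ≤ ε * δ := by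
    have hdist := hclose t₁ t₂ (fun J _ => ht₁ J) (fun J _ => ht₂ J)
    rw [Real.dist_eq, ← Finset.sum_sub_distrib] at hdist
    calc ε * ∑ J ∈ bad, volume.real (J : Set (ι → ℝ))
        ≤ ∑ J ∈ bad, volume.real (J : Set (ι → ℝ)) * (f (t₁ J) - f (t₂ J)) := by
          rw [Finset.mul_sum]
          exact Finset.sum_le_sum fun J hJ => by
            rw [mul_comm]
            exact mul_le_mul_of_nonneg_left (hbad J (Finset.mem_filter.1 hJ).2)
              (Box.volume_real_pos J).le
      _ ≤ ∑ J ∈ π.boxes, volume.real (J : Set (ι → ℝ)) * (f (t₁ J) - f (t₂ J)) :=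
          Finset.sum_le_sum_of_subset_of_nonneg (Finset.filter_subset _ _) fun J _ _ =>
            mul_nonneg (Box.volume_real_pos J).le (hpos J)
      _ ≤ ε * δ := by
          simpa [BoxAdditiveMap.volume, mul_sub] using (le_abs_self _).trans hdist
  have hcover : {x ∈ (I : Set (ι → ℝ)) | ENNReal.ofReal ε < oscillation f x} ⊆
      (⋃ J ∈ bad, Box.Icc J) ∪ ⋃ J ∈ π.boxes, Box.Icc J \ Box.Ioo J := by
    rintro x ⟨hxI, hx⟩
    obtain ⟨J, hJ, hxJ⟩ := hπ x hxI
    by_cases hxo : x ∈ Box.Ioo J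
    · refine Or.inl (mem_iUnion₂.2 ⟨J, Finset.mem_filter.2 ⟨hJ, ?_⟩, Box.coe_subset_Icc hxJ⟩)
      by_contra hgood
      exact hx.not_ge (Box.oscillation_le_of_forall_sub_lt hxo
        fun y hy z hz => lt_of_not_ge fun hle => hgood ⟨y, hy, z, hz, hle⟩)
    · exact Or.inr (mem_iUnion₂.2 ⟨J, hJ, Box.coe_subset_Icc hxJ, hxo⟩)
  calc volume {x ∈ (I : Set (ι → ℝ)) | ENNReal.ofReal ε < oscillation f x}
      ≤ volume (⋃ J ∈ bad, Box.Icc J) := (measure_mono hcover).trans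
        ((measure_union_le _ _).trans (by rw [Box.volume_biUnion_Icc_sdiff_Ioo, add_zero]))
    _ ≤ ENNReal.ofReal (∑ J ∈ bad, volume.real (J : Set (ι → ℝ))) :=
        Box.volume_biUnion_Icc_le bad
    _ ≤ ENNReal.ofReal δ := ENNReal.ofReal_le_ofReal (le_of_mul_le_mul_left hsum hε)

theorem Integrable.ae_continuousAt {f : (ι → ℝ) → ℝ}
    (h : Integrable I IntegrationParams.Riemann f BoxAdditiveMap.volume) :
    ∀ᵐ x ∂volume.restrict (I : Set (ι → ℝ)), ContinuousAt f x := by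
  rw [ae_iff, Measure.restrict_apply' I.measurableSet_coe]
  have hnull : ∀ n : ℕ, volume {x ∈ (I : Set (ι → ℝ)) |
      ENNReal.ofReal (1 / (n + 1)) < oscillation f x} = 0 := fun n =>
    le_antisymm (ENNReal.le_of_forall_pos_le_add fun δ hδ _ => by
      simpa using h.volume_lt_oscillation_le (ε := 1 / (n + 1)) (by positivity)
        (NNReal.coe_pos.2 hδ)) zero_le
  refine measure_mono_null ?_ (measure_iUnion_null hnull)
  rintro x ⟨hx, hxI⟩
  have hosc : 0 < oscillation f x :=
    pos_iff_ne_zero.2 fun h0 => hx ((Oscillation.eq_zero_iff_continuousAt f x).1 h0)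
  obtain ⟨r, -, hr0, hr⟩ := ENNReal.lt_iff_exists_real_btwn.1 hosc
  obtain ⟨n, hn⟩ := exists_nat_one_div_lt (ENNReal.ofReal_pos.1 hr0)
  exact mem_iUnion.2
    ⟨n, hxI, ((ENNReal.ofReal_lt_ofReal_iff_of_nonneg (by positivity)).2 hn).trans hr⟩

theorem Integrable.integrableOn {f : (ι → ℝ) → ℝ}
    (h : Integrable I IntegrationParams.Riemann f BoxAdditiveMap.volume) :
    IntegrableOn f I volume := by
  obtain ⟨C, hC⟩ := h.exists_forall_norm_le
  exact ⟨aestronglyMeasurable_of_ae_continuousAt h.ae_continuousAt,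
    .restrict_of_bounded (C := C) (I.measure_coe_lt_top _)
      ((ae_restrict_iff' I.measurableSet_coe).2 (.of_forall hC))⟩

theorem Integrable.not_ae_eq_indicator {f : (ι → ℝ) → ℝ}
    (h : Integrable I IntegrationParams.Riemann f BoxAdditiveMap.volume) {A : Set (ι → ℝ)}
    (hA : ∀ J ≤ I, volume (A ∩ J) ≠ 0) (hAI : volume (A ∩ I) < volume (I : Set (ι → ℝ))) :
    ¬ f =ᵐ[volume.restrict I] A.indicator fun _ => 1 := by
  classical
  intro hfA
  have hpoint : ∀ J ≤ I, ∀ S ⊆ (J : Set (ι → ℝ)), volume S ≠ 0 →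
      ∃ y ∈ S, f y = A.indicator (fun _ => 1) y := fun J hJ S hS hS0 =>
    Measure.exists_mem_of_measure_ne_zero_of_ae hS0
      (ae_restrict_of_ae_restrict_of_subset (hS.trans hJ) hfA)
  have hgap : 0 < volume.real (I : Set (ι → ℝ)) - volume.real (A ∩ I) :=
    sub_pos.2 ((ENNReal.toReal_lt_toReal (measure_ne_top_of_subset inter_subset_right
      (I.measure_coe_lt_top _).ne) (I.measure_coe_lt_top _).ne).2 hAI)
  obtain ⟨π, hπ, hclose⟩ := h.exists_isPartition_dist_sum_le (half_pos hgap)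
  have htags : ∀ J ∈ π, ∃ y ∈ Box.Icc J, ∃ z ∈ Box.Icc J,
      f y - f z = if volume (↑J \ A) = 0 then 0 else 1 := by
    intro J hJ
    have hJI := π.le_of_mem hJ
    obtain ⟨y, ⟨hyA, hyJ⟩, hy⟩ := hpoint J hJI _ inter_subset_right (hA J hJI)
    split_ifs with hfull
    · exact ⟨y, Box.coe_subset_Icc hyJ, y, Box.coe_subset_Icc hyJ, sub_self _⟩
    · obtain ⟨z, ⟨hzJ, hzA⟩, hz⟩ := hpoint J hJI _ sdiff_subset hfull
      refine ⟨y, Box.coe_subset_Icc hyJ, z, Box.coe_subset_Icc hzJ, ?_⟩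
      rw [hy, hz, indicator_of_mem hyA, indicator_of_notMem hzA, sub_zero]
  choose! t₁ ht₁ t₂ ht₂ hdiff using htags
  have hsplit := Finset.sum_filter_add_sum_filter_not π.boxes (fun J => volume (↑J \ A) = 0)
    fun J => volume.real (J : Set (ι → ℝ))
  rw [← π.measure_iUnion_toReal, hπ.iUnion_eq] at hsplit
  have hsum : ∑ J ∈ π.boxes, BoxAdditiveMap.volume J (f (t₁ J)) -
      ∑ J ∈ π.boxes, BoxAdditiveMap.volume J (f (t₂ J)) =
      ∑ J ∈ π.boxes.filter (fun J : Box ι => ¬ volume (↑J \ A) = 0),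
        volume.real (J : Set (ι → ℝ)) := by
    rw [← Finset.sum_sub_distrib, Finset.sum_filter]
    refine Finset.sum_congr rfl fun J hJ => ?_
    simp only [BoxAdditiveMap.volume, BoxAdditiveMap.toSMul_apply, Measure.toBoxAdditive_apply,
      smul_eq_mul, ← mul_sub, hdiff J hJ]
    split_ifs <;> simp
  have hdist := hclose t₁ t₂ ht₁ ht₂
  rw [Real.dist_eq, hsum] at hdist
  linarith [π.sum_measureReal_filter_le volume A, (le_abs_self _).trans hdist]

end BoxIntegral

lemma BoxIntegral.Box.coe_eq_funUnique_preimage (J : Box (Fin 1)) :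
    (J : Set (Fin 1 → ℝ)) =
      MeasurableEquiv.funUnique (Fin 1) ℝ ⁻¹' Ioc (J.lower 0) (J.upper 0) := by
  ext x
  simp [Box.mem_def, Fin.forall_fin_one]

namespace RiemannIntegrableOn01

variable {f : ℝ → ℝ}

theorem integrableOn (hf : RiemannIntegrableOn01 f) : IntegrableOn f (Icc 0 1) := by
  have h := BoxIntegral.Integrable.integrableOn hf
  rw [Box.coe_eq_funUnique_preimage] at h
  rw [integrableOn_Icc_iff_integrableOn_Ioc]
  exact ((volume_preserving_funUnique (Fin 1) ℝ).integrableOn_comp_preimage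
    (MeasurableEquiv.measurableEmbedding _)).1 h

theorem not_ae_eq_indicator (hf : RiemannIntegrableOn01 f) {A : Set ℝ}
    (hA : ∀ a b, 0 ≤ a → a < b → b ≤ 1 → volume (A ∩ Ioo a b) ≠ 0)
    (hA1 : volume (A ∩ Icc 0 1) < 1) :
    ¬ f =ᵐ[volume.restrict (Icc 0 1)] A.indicator fun _ => 1 := by
  set e := MeasurableEquiv.funUnique (Fin 1) ℝ
  have he := volume_preserving_funUnique (Fin 1) ℝ
  have hvol : ∀ J : Box (Fin 1),
      volume (e ⁻¹' A ∩ J) = volume (A ∩ Ioc (J.lower 0) (J.upper 0)) := fun J => by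
    rw [Box.coe_eq_funUnique_preimage, ← preimage_inter]
    exact he.measure_preimage_equiv _
  intro hfA
  refine BoxIntegral.Integrable.not_ae_eq_indicator hf (A := e ⁻¹' A) (fun J hJ => ?_) ?_ ?_
  · have hJ' := Box.le_iff_bounds.1 hJ
    rw [hvol]
    exact fun h0 => hA _ _ (hJ'.1 0) (J.lower_lt_upper 0) (hJ'.2 0)
      (measure_mono_null (inter_subset_inter_right _ Ioo_subset_Ioc_self) h0)
  · have hunit : volume (unitBox : Set (Fin 1 → ℝ)) = 1 := by
      rw [Box.coe_eq_funUnique_preimage]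
      exact (he.measure_preimage_equiv _).trans (by simp [unitBox])
    rw [hvol, hunit]
    exact (measure_mono (inter_subset_inter_right _ Ioc_subset_Icc_self)).trans_lt hA1
  · rw [Box.coe_eq_funUnique_preimage]
    exact (he.restrict_preimage measurableSet_Ioc).quasiMeasurePreserving.ae_eq_comp
      (ae_restrict_of_ae_restrict_of_subset Ioc_subset_Icc_self hfA)

end RiemannIntegrableOn01

section IntervalCover

variable {α : Type*}

lemma monotone_biUnion_Icc_one (s : ℕ → Set α) : Monotone fun k => ⋃ j ∈ Icc 1 k, s j :=
  fun _ _ hkm => biUnion_subset_biUnion_left (Icc_subset_Icc_right hkm)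

lemma iUnion_biUnion_Icc_one (s : ℕ → Set α) :
    ⋃ k, ⋃ j ∈ Icc 1 k, s j = ⋃ j ∈ {j : ℕ | 1 ≤ j}, s j := by
  ext x
  simp only [mem_iUnion, mem_Icc, mem_ofPred_eq, exists_prop]
  exact ⟨fun ⟨_, j, hj, hx⟩ => ⟨j, hj.1, hx⟩, fun ⟨j, hj, hx⟩ => ⟨j, j, ⟨hj, le_rfl⟩, hx⟩⟩

lemma measure_biUnion_le_of_le_div_two_pow [MeasurableSpace α] {μ : Measure α}
    {s : ℕ → Set α} {c : ℝ} (hc : 0 ≤ c) (hs : ∀ j, μ (s j) ≤ ENNReal.ofReal (c / 2 ^ j)) :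
    μ (⋃ j ∈ {j : ℕ | 1 ≤ j}, s j) ≤ ENNReal.ofReal c := by
  have hU : ⋃ j ∈ {j : ℕ | 1 ≤ j}, s j = ⋃ j, s (j + 1) := by
    ext x
    simp only [mem_iUnion, mem_ofPred_eq, exists_prop]
    exact ⟨fun ⟨j, hj, hx⟩ => ⟨j - 1, by rwa [Nat.sub_add_cancel hj]⟩,
      fun ⟨j, hx⟩ => ⟨j + 1, Nat.le_add_left 1 j, hx⟩⟩
  calc μ (⋃ j ∈ {j : ℕ | 1 ≤ j}, s j) ≤ ∑' j, μ (s (j + 1)) := hU ▸ measure_iUnion_le _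
    _ ≤ ∑' j, ENNReal.ofReal (c / 2 / 2 ^ j) :=
        ENNReal.tsum_le_tsum fun j => (hs (j + 1)).trans_eq (by rw [pow_succ', div_div])
    _ = ENNReal.ofReal c := by
        rw [← ENNReal.ofReal_tsum_of_nonneg (fun j => by positivity) (summable_geometric_two' c),
          tsum_geometric_two']

end IntervalCover

lemma measure_biUnion_inter_Ioo_ne_zero {q : ℕ → ℝ}
    (hq : SurjOn q {n : ℕ | 1 ≤ n} (Icc (0 : ℝ) 1 ∩ range ((↑) : ℚ → ℝ))) {r : ℕ → ℝ}
    (hr : ∀ j, 0 < r j) {a b : ℝ} (ha : 0 ≤ a) (hab : a < b) (hb : b ≤ 1) :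
    volume ((⋃ j ∈ {j : ℕ | 1 ≤ j}, Icc 0 1 ∩ Ioo (q j - r j) (q j + r j)) ∩ Ioo a b) ≠ 0 := by
  obtain ⟨s, has, hsb⟩ := exists_rat_btwn hab
  obtain ⟨j, hj, hjs⟩ := hq ⟨⟨ha.trans has.le, hsb.le.trans hb⟩, s, rfl⟩
  have hsub : Ioo (q j - r j) (q j + r j) ∩ Ioo a b ⊆
      (⋃ j ∈ {j : ℕ | 1 ≤ j}, Icc 0 1 ∩ Ioo (q j - r j) (q j + r j)) ∩ Ioo a b :=
    fun x hx => ⟨mem_biUnion hj ⟨⟨ha.trans hx.2.1.le, hx.2.2.le.trans hb⟩, hx.1⟩, hx.2⟩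
  refine fun h0 => (isOpen_Ioo.inter isOpen_Ioo).measure_ne_zero volume ?_
    (measure_mono_null hsub h0)
  exact ⟨q j, ⟨by linarith [hr j], by linarith [hr j]⟩, hjs ▸ ⟨has, hsb⟩⟩

theorem stmt16 (q : ℕ → ℝ)
    (hq : Set.BijOn q {n : ℕ | 1 ≤ n} (Set.Icc (0:ℝ) 1 ∩ Set.range ((↑) : ℚ → ℝ)))
    (ℓ : ℝ) (hℓ : ℓ ∈ Set.Ioo (0:ℝ) 1)
    (I : ℕ → Set ℝ)
    (hI : ∀ j, I j = Set.Icc (0:ℝ) 1 ∩ Set.Ioo (q j - ℓ / 2 ^ (j + 1)) (q j + ℓ / 2 ^ (j + 1)))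
    (Ak : ℕ → Set ℝ) (hAk : ∀ k, Ak k = ⋃ j ∈ Set.Icc 1 k, I j)
    (A : Set ℝ) (hA : A = ⋃ j ∈ {j : ℕ | 1 ≤ j}, I j)
    (Gk : ℕ → ℝ → ℝ) (hGk : ∀ k, Gk k = Set.indicator (Ak k) (fun _ => (1:ℝ)))
    (G : ℝ → ℝ) (hG : G = Set.indicator A (fun _ => (1:ℝ))) :
    (∀ ε : ℝ, 0 < ε → ∃ N : ℕ, ∀ k ≥ N, ∀ m ≥ N,
      ∫ x in Set.Icc (0:ℝ) 1, |Gk k x - Gk m x| < ε) ∧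
    Tendsto (fun k => ∫ x in Set.Icc (0:ℝ) 1, |G x - Gk k x|) atTop (𝓝 0) ∧
    (∀ f : ℝ → ℝ, RiemannIntegrableOn01 f →
      ¬ Tendsto (fun k => ∫ x in Set.Icc (0:ℝ) 1, |f x - Gk k x|) atTop (𝓝 0)) := by
  subst hG
  obtain rfl : Gk = fun k => (Ak k).indicator fun _ => (1 : ℝ) := funext hGk
  obtain rfl : Ak = fun k => ⋃ j ∈ Icc 1 k, I j := funext hAk
  have hImeas (j : ℕ) : MeasurableSet (I j) := hI j ▸ measurableSet_Icc.inter measurableSet_Ioo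
  have hAkmeas (k : ℕ) : MeasurableSet (⋃ j ∈ Icc 1 k, I j) :=
    .biUnion (to_countable _) fun j _ => hImeas j
  have hint {s : Set ℝ} (hs : MeasurableSet s) :
      Integrable (s.indicator fun _ => (1 : ℝ)) (volume.restrict (Icc 0 1)) :=
    (MeasureTheory.integrable_const 1).indicator hs
  have hlim := tendsto_integral_abs_indicator_iUnion_sub (μ := volume.restrict (Icc (0 : ℝ) 1))
    (monotone_biUnion_Icc_one I) hAkmeas
  rw [iUnion_biUnion_Icc_one, ← hA] at hlim
  have hGint := hint (hA ▸ iUnion_biUnion_Icc_one I ▸ MeasurableSet.iUnion hAkmeas)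
  refine ⟨exists_forall_integral_abs_sub_lt hGint (fun k => hint (hAkmeas k)) hlim, hlim,
    fun f hf hfk => hf.not_ae_eq_indicator (fun a b ha hab hb => ?_) ?_
      (ae_eq_of_tendsto_integral_abs_sub hf.integrableOn hGint (fun k => hint (hAkmeas k))
        hfk hlim)⟩
  · simp only [hA, hI]
    exact measure_biUnion_inter_Ioo_ne_zero hq.surjOn (fun j => by have := hℓ.1; positivity)
      ha hab hb
  · have hIvol (j : ℕ) : volume (I j) ≤ ENNReal.ofReal (ℓ / 2 ^ j) := by
      rw [hI]
      refine (measure_mono inter_subset_right).trans_eq ?_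
      rw [Real.volume_Ioo]; congr 1; ring
    calc volume (A ∩ Icc 0 1) ≤ volume A := measure_mono inter_subset_left
      _ ≤ ENNReal.ofReal ℓ := hA ▸ measure_biUnion_le_of_le_div_two_pow hℓ.1.le hIvol
      _ < 1 := ENNReal.ofReal_lt_one.2 hℓ.2
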